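/- For the figure-eight knot $A$-polynomial $A(l,m) = l m^8 - l m^6 - (l^2+2l+1)m^4 - l m^2 + l$, we have $A(-1,-1)=0$, and there exist exactly two holomorphic branches $l(m)$ with $l(-1)=-1$ solving $A(l(m),m)=0$ near $m=-1$; their first-order Taylor coefficients at $m=-1$ are $2\sqrt{-3}$ and $-2\sqrt{-3}$ respectively. -/

import Mathlib

/-!
As a polynomial in `l`, `A(l, m) = -m⁴ l² + P(m) l - m⁴`, whose discriminant
`P² - 4m⁸ = (m² - 1)² Q(m)` carries the square factor `(m² - 1)²`. The roots are therefore
`(P ± (m² - 1) √Q) / (2m⁴)`, and since `Q(-1) = -12 ≠ 0` a holomorphic `√Q` exists near `-1`: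
these are the two branches. Both equal `-1` at `m = -1` because `m² - 1` vanishes there, which
also makes their derivatives `∓√Q(-1) = ∓2√-3`. Any other holomorphic solution `l` makes the
product `(l - l₁)(l - l₂)` vanish, so by the identity theorem one factor vanishes near `-1`.
-/

open Filter

/-- The `A`-polynomial of the figure-eight knot complement. -/
noncomputable def fig8A (l m : ℂ) : ℂ :=
  l * m ^ 8 - l * m ^ 6 - (l ^ 2 + 2 * l + 1) * m ^ 4 - l * m ^ 2 + l

open Topology Complex

theorem AnalyticAt.eventually_zero_or_eventually_zero_of_mul {𝕜 : Type*}
    [NontriviallyNormedField 𝕜] {f g : 𝕜 → 𝕜} {a : 𝕜} (hf : AnalyticAt 𝕜 f a)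
    (hg : AnalyticAt 𝕜 g a) (h : ∀ᶠ z in 𝓝 a, f z * g z = 0) :
    (∀ᶠ z in 𝓝 a, f z = 0) ∨ ∀ᶠ z in 𝓝 a, g z = 0 := by
  refine hf.eventually_eq_zero_or_eventually_ne_zero.imp_right fun hf_ne => ?_
  rw [← hg.frequently_zero_iff_eventually_zero]
  refine ((h.filter_mono nhdsWithin_le_nhds).and hf_ne).mono ?_ |>.frequently
  exact fun z hz => (mul_eq_zero.1 hz.1).resolve_left hz.2

noncomputable def fig8P (m : ℂ) : ℂ := m ^ 8 - m ^ 6 - 2 * m ^ 4 - m ^ 2 + 1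

noncomputable def fig8Q (m : ℂ) : ℂ :=
  (m ^ 4 + m ^ 2 + 1) * (m ^ 8 - m ^ 6 - 4 * m ^ 4 - m ^ 2 + 1)

/-- The root of `fig8A · m` determined by a choice `s` of square root of `fig8Q`. -/
noncomputable def fig8Branch (s : ℂ → ℂ) (m : ℂ) : ℂ :=
  (fig8P m + (m ^ 2 - 1) * s m) / (2 * m ^ 4)

theorem fig8A_eq_mul {s : ℂ → ℂ} {m : ℂ} (hm : m ≠ 0) (hs : s m ^ 2 = fig8Q m) (l : ℂ) :
    fig8A l m = -m ^ 4 * (l - fig8Branch s m) * (l - fig8Branch (-s) m) := by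
  simp only [fig8A, fig8Branch, fig8P, Pi.neg_apply]
  unfold fig8Q at hs
  field_simp
  linear_combination ((m ^ 2 - 1) ^ 3 * (m ^ 2 + 1) - m ^ 4 * (m ^ 2 - 1) ^ 2) * hs

theorem fig8A_fig8Branch_eq_zero {s : ℂ → ℂ} {m : ℂ} (hm : m ≠ 0) (hs : s m ^ 2 = fig8Q m) :
    fig8A (fig8Branch s m) m = 0 := by
  rw [fig8A_eq_mul hm hs, sub_self, mul_zero, zero_mul]

theorem fig8Branch_neg_one (s : ℂ → ℂ) : fig8Branch s (-1) = -1 := by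
  norm_num [fig8Branch, fig8P]

theorem analyticAt_fig8Branch {s : ℂ → ℂ} (hs : AnalyticAt ℂ s (-1)) :
    AnalyticAt ℂ (fig8Branch s) (-1) := by
  unfold fig8Branch fig8P
  fun_prop (disch := norm_num)

theorem hasDerivAt_fig8Branch {s : ℂ → ℂ} (hs : DifferentiableAt ℂ s (-1)) :
    HasDerivAt (fig8Branch s) (-s (-1)) (-1) := by
  have hP : HasDerivAt fig8P 8 (-1) := by
    have := ((((hasDerivAt_pow 8 (-1 : ℂ)).sub (hasDerivAt_pow 6 (-1 : ℂ))).sub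
      ((hasDerivAt_pow 4 (-1 : ℂ)).const_mul 2)).sub (hasDerivAt_pow 2 (-1 : ℂ))).add_const 1
    exact this.congr_deriv (by norm_num)
  have := (hP.add (((hasDerivAt_pow 2 (-1 : ℂ)).sub_const 1).mul hs.hasDerivAt)).div
    ((hasDerivAt_pow 4 (-1 : ℂ)).const_mul 2) (by norm_num)
  refine this.congr_deriv ?_
  norm_num [fig8P]
  ring

/-- A square root of `fig8Q`, holomorphic near `-1` since `-fig8Q (-1) = 12` lies in the
slit plane. -/
noncomputable def fig8Sqrt (m : ℂ) : ℂ := I * (-fig8Q m) ^ (2⁻¹ : ℂ)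

theorem fig8Sqrt_sq (m : ℂ) : fig8Sqrt m ^ 2 = fig8Q m := by
  simp [fig8Sqrt, mul_pow]

theorem analyticAt_fig8Sqrt : AnalyticAt ℂ fig8Sqrt (-1) := by
  unfold fig8Sqrt
  refine analyticAt_const.mul (AnalyticAt.cpow ?_ analyticAt_const ?_)
  · unfold fig8Q
    fun_prop
  · norm_num [fig8Q, mem_slitPlane_iff]

theorem fig8Sqrt_neg_one : fig8Sqrt (-1) = 2 * (I * Real.sqrt 3) := by
  have hsqrt : Real.sqrt 12 = 2 * Real.sqrt 3 := by
    rw [show (12 : ℝ) = 2 ^ 2 * 3 by norm_num, Real.sqrt_mul (by norm_num),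
      Real.sqrt_sq (by norm_num)]
  have hQ : -fig8Q (-1) = ((12 : ℝ) : ℂ) := by norm_num [fig8Q]
  have hcpow : (-fig8Q (-1)) ^ (2⁻¹ : ℂ) = ((2 * Real.sqrt 3 : ℝ) : ℂ) := by
    rw [hQ, ← hsqrt, Real.sqrt_eq_rpow, ofReal_cpow (by norm_num)]
    norm_num
  rw [fig8Sqrt, hcpow]
  push_cast
  ring

/-- `A(-1,-1) = 0` for the figure-eight knot `A`-polynomial, and there are exactly
two holomorphic branches `l(m)` with `l(-1) = -1` and `A(l(m), m) = 0` near `m = -1`;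
their first-order Taylor coefficients at `m = -1` are `2√-3` and `-2√-3`. -/
theorem fig8A_two_branches :
    fig8A (-1) (-1) = 0 ∧
    ∃ l₁ l₂ : ℂ → ℂ,
      (AnalyticAt ℂ l₁ (-1) ∧ l₁ (-1) = -1 ∧
        (∀ᶠ m in nhds (-1 : ℂ), fig8A (l₁ m) m = 0) ∧
        deriv l₁ (-1) = 2 * (Complex.I * Real.sqrt 3)) ∧
      (AnalyticAt ℂ l₂ (-1) ∧ l₂ (-1) = -1 ∧
        (∀ᶠ m in nhds (-1 : ℂ), fig8A (l₂ m) m = 0) ∧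
        deriv l₂ (-1) = -(2 * (Complex.I * Real.sqrt 3))) ∧
      (∀ l : ℂ → ℂ, AnalyticAt ℂ l (-1) → l (-1) = -1 →
        (∀ᶠ m in nhds (-1 : ℂ), fig8A (l m) m = 0) →
        (∀ᶠ m in nhds (-1 : ℂ), l m = l₁ m) ∨ (∀ᶠ m in nhds (-1 : ℂ), l m = l₂ m)) := by
  have hG := analyticAt_fig8Sqrt
  have hne : ∀ᶠ m in 𝓝 (-1 : ℂ), m ≠ 0 := eventually_ne_nhds (by norm_num)
  refine ⟨by norm_num [fig8A], fig8Branch (-fig8Sqrt), fig8Branch fig8Sqrt,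
    ⟨analyticAt_fig8Branch hG.neg, fig8Branch_neg_one _,
      hne.mono fun m hm => fig8A_fig8Branch_eq_zero hm (by simp [fig8Sqrt_sq]),
      by simpa [fig8Sqrt_neg_one] using (hasDerivAt_fig8Branch hG.neg.differentiableAt).deriv⟩,
    ⟨analyticAt_fig8Branch hG, fig8Branch_neg_one _,
      hne.mono fun m hm => fig8A_fig8Branch_eq_zero hm (fig8Sqrt_sq m),
      by simpa [fig8Sqrt_neg_one] using (hasDerivAt_fig8Branch hG.differentiableAt).deriv⟩, ?_⟩
  intro l hl _ hA
  have hprod : ∀ᶠ m in 𝓝 (-1 : ℂ), (l m - fig8Branch fig8Sqrt m) *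
      (l m - fig8Branch (-fig8Sqrt) m) = 0 := by
    filter_upwards [hne, hA] with m hm h
    rw [fig8A_eq_mul hm (fig8Sqrt_sq m), mul_assoc] at h
    exact (mul_eq_zero.1 h).resolve_left (by simpa using hm)
  refine ((hl.sub (analyticAt_fig8Branch hG)).eventually_zero_or_eventually_zero_of_mul
    (hl.sub (analyticAt_fig8Branch hG.neg)) hprod).symm.imp ?_ ?_ <;>
  exact fun h => h.mono fun m => sub_eq_zero.1
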